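/- arXiv:2405.08028 — 6 statements merged into one kernel-verified Lean document; each statement's English description precedes it below -/
import Mathlib

section
/- Let T be a rooted tree on vertex set {1,...,n} with root r, and for each vertex i define the rational function d_i(x) = x - Σ_{j child of i} 1/d_j(x). Then for every vertex i, d_i(x) = φ^{T(i)}(x) / φ^{T(i)∖i}(x), where T(i) is the subtree rooted at i, φ^G denotes the characteristic polynomial of the adjacency matrix of G, and T(i)∖i is the forest obtained by deleting i from T(i). -/
set_option linter.unusedSectionVars false
set_option maxHeartbeats 1000000

open Finset Polynomial

/-- The Jacobs–Trevisan rational function of vertex `i` in a rooted tree on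
`Fin n` given by a parent map (root `0`, and `parent j < j` for `j ≠ 0`, so the
children of `i` are the `j > i` with `parent j = i`):
`d i = X - ∑_{j child of i} (d j)⁻¹`. -/
noncomputable def dRat (n : ℕ) (parent : Fin n → Fin n) (i : Fin n) : RatFunc ℝ :=
  RatFunc.X - ∑ j ∈ (Finset.univ.filter fun j => parent j = i ∧ i < j).attach,
      (dRat n parent j.1)⁻¹
termination_by n - i.1
decreasing_by
  have hj := j.2
  simp only [Finset.mem_filter, Finset.mem_univ, true_and] at hj
  have := j.1.isLt
  omega

/-- `j` is a descendant of `i` (possibly `j = i`): some iterate of the parent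
map sends `j` to `i`. -/
def Desc (n : ℕ) (parent : Fin n → Fin n) (i j : Fin n) : Prop :=
  ∃ k ∈ Finset.range (n + 1), parent^[k] j = i

instance (n : ℕ) (parent : Fin n → Fin n) (i j : Fin n) :
    Decidable (Desc n parent i j) := by
  unfold Desc; infer_instance

/-- Adjacency matrix of the tree determined by the parent map. -/
def adjMat (n : ℕ) (parent : Fin n → Fin n) : Matrix (Fin n) (Fin n) ℝ :=
  fun a b => if (parent a = b ∧ a ≠ b) ∨ (parent b = a ∧ a ≠ b) then 1 else 0

/-- Characteristic polynomial of the adjacency matrix of the induced subgraph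
on the vertices satisfying `p`. -/
noncomputable def subCharPoly (n : ℕ) (parent : Fin n → Fin n)
    (p : Fin n → Prop) [DecidablePred p] : Polynomial ℝ :=
  Matrix.charpoly
    ((adjMat n parent).submatrix (Subtype.val : {j // p j} → Fin n) Subtype.val)

section DescLemmas
variable {n : ℕ} (hn : 0 < n) (parent : Fin n → Fin n)
variable (hroot : parent ⟨0, hn⟩ = ⟨0, hn⟩)
variable (hpar : ∀ j : Fin n, j ≠ ⟨0, hn⟩ → parent j < j)

include hroot hpar

theorem parent_le (a : Fin n) : parent a ≤ a := by
  by_cases h : a = ⟨0, hn⟩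
  · subst h; rw [hroot]
  · exact le_of_lt (hpar a h)

theorem iter_le (k : ℕ) (a : Fin n) : parent^[k] a ≤ a := by
  induction k generalizing a with
  | zero => simp
  | succ k ih =>
    rw [Function.iterate_succ_apply]
    exact le_trans (ih (parent a)) (parent_le hn parent hroot hpar a)

theorem desc_refl (i : Fin n) : Desc n parent i i :=
  ⟨0, by simp, rfl⟩

theorem desc_le {i j : Fin n} (h : Desc n parent i j) : i ≤ j := by
  obtain ⟨k, -, rfl⟩ := h
  exact iter_le hn parent hroot hpar k j

theorem root_fix (t : ℕ) : parent^[t] ⟨0, hn⟩ = ⟨0, hn⟩ := by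
  induction t with
  | zero => rfl
  | succ t ih => rw [Function.iterate_succ_apply, hroot, ih]

theorem desc_of_exists {i j : Fin n} (h : ∃ k, parent^[k] j = i) :
    Desc n parent i j := by
  obtain ⟨k, hk⟩ := h
  by_cases hkn : k ≤ n
  · exact ⟨k, Finset.mem_range.2 (by omega), hk⟩
  · -- some early repeat: find m < n with parent^[m+1] j = parent^[m] j
    have hstep : ∃ m < n, parent^[m+1] j = parent^[m] j := by
      by_contra hc
      push_neg at hc
      have hstrict : ∀ m ≤ n, (parent^[m] j).1 + m ≤ j.1 := by
        intro m hm
        induction m with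
        | zero => simp
        | succ m ih =>
          have h1 := ih (by omega)
          have h2 : parent^[m+1] j ≠ parent^[m] j := hc m (by omega)
          have h3 : parent^[m+1] j ≤ parent^[m] j := by
            rw [Function.iterate_succ_apply']
            exact parent_le hn parent hroot hpar _
          have h4 : (parent^[m+1] j).1 < (parent^[m] j).1 := by
            rcases lt_or_eq_of_le h3 with h | h
            · exact h
            · exact absurd (Fin.ext (congrArg Fin.val h)) h2
          omega
      have := hstrict n le_rfl
      have := j.isLt
      omega
    obtain ⟨m, hm, hmeq⟩ := hstep
    -- parent^[m] j is fixed by parent, hence is the root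
    set a := parent^[m] j with ha
    have haroot : a = ⟨0, hn⟩ := by
      by_contra hc
      have := hpar a hc
      rw [Function.iterate_succ_apply', ← ha] at hmeq
      exact absurd hmeq (Fin.ne_of_lt this)
    -- then i = root
    have hi : i = ⟨0, hn⟩ := by
      have : parent^[k] j = parent^[k - m] (parent^[m] j) := by
        rw [← Function.iterate_add_apply]
        congr 1; omega
      rw [this, ← ha, haroot, root_fix hn parent hroot hpar] at hk
      exact hk.symm
    exact ⟨m, Finset.mem_range.2 (by omega), by rw [← ha, haroot, ← hi]⟩

theorem desc_iff {i j : Fin n} : Desc n parent i j ↔ ∃ k, parent^[k] j = i :=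
  ⟨fun ⟨k, _, hk⟩ => ⟨k, hk⟩, desc_of_exists hn parent hroot hpar⟩

theorem desc_trans {i j l : Fin n} (h1 : Desc n parent i j) (h2 : Desc n parent j l) :
    Desc n parent i l := by
  obtain ⟨k1, -, hk1⟩ := h1
  obtain ⟨k2, -, hk2⟩ := h2
  exact desc_of_exists hn parent hroot hpar ⟨k1 + k2, by
    rw [Function.iterate_add_apply, hk2, hk1]⟩

theorem child_desc {c i : Fin n} (h : parent c = i) :
    Desc n parent i c :=
  desc_of_exists hn parent hroot hpar ⟨1, h⟩

theorem child_lt {c i : Fin n} (h : parent c = i) (hne : c ≠ i) : i < c := by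
  by_cases hc : c = ⟨0, hn⟩
  · subst hc; rw [hroot] at h; exact absurd h hne
  · have := hpar c hc; rw [h] at this; exact this

theorem desc_ne_exists_child {i j : Fin n} (h : Desc n parent i j) (hne : j ≠ i) :
    ∃ c, parent c = i ∧ i < c ∧ Desc n parent c j := by
  obtain ⟨k, -, hk⟩ := h
  induction k generalizing j with
  | zero => exact absurd hk hne
  | succ k ih =>
    rw [Function.iterate_succ_apply'] at hk
    by_cases hb : parent^[k] j = i
    · exact ih hne hb
    · refine ⟨parent^[k] j, hk, child_lt hn parent hroot hpar hk hb, ?_⟩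
      exact desc_of_exists hn parent hroot hpar ⟨k, rfl⟩

theorem desc_child_unique {i c c' j : Fin n} (hc : parent c = i) (hlt : i < c)
    (hc' : parent c' = i) (hlt' : i < c') (h : Desc n parent c j)
    (h' : Desc n parent c' j) : c = c' := by
  obtain ⟨k, -, hk⟩ := h
  obtain ⟨k', -, hk'⟩ := h'
  have key : ∀ (a b : Fin n) (ka kb : ℕ), parent a = i → i < b → ka < kb →
      parent^[ka] j = a → parent^[kb] j = b → False := by
    intro a b ka kb ha hb hab hka hkb
    have e1 : parent^[kb - ka] a = b := by
      rw [← hka, ← Function.iterate_add_apply, show kb - ka + ka = kb from by omega, hkb]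
    have e2 : parent^[kb - ka] a = parent^[kb - ka - 1] i := by
      conv_lhs => rw [show kb - ka = (kb - ka - 1) + 1 from by omega]
      rw [Function.iterate_succ_apply, ha]
    have e3 : parent^[kb - ka - 1] i ≤ i := iter_le hn parent hroot hpar _ i
    rw [e2] at e1
    have : b ≤ i := by rw [← e1]; exact e3
    exact absurd hb (not_lt.2 this)
  rcases lt_trichotomy k k' with hlt2 | heq | hlt2
  · exact absurd (key c c' k k' hc hlt' hlt2 hk hk') id
  · subst heq; rw [hk] at hk'; exact hk'
  · exact absurd (key c' c k' k hc' hlt hlt2 hk' hk) id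

theorem desc_of_child {i c j : Fin n} (hc : parent c = i) (hlt : i < c)
    (h : Desc n parent c j) : Desc n parent i j ∧ j ≠ i := by
  constructor
  · exact desc_trans hn parent hroot hpar (child_desc hn parent hroot hpar hc) h
  · have := desc_le hn parent hroot hpar h
    intro he; subst he; omega

theorem desc_parent {c j : Fin n} (h : Desc n parent c j) (hne : j ≠ c) :
    Desc n parent c (parent j) := by
  obtain ⟨k, -, hk⟩ := h
  cases k with
  | zero => exact absurd hk hne
  | succ k =>
    rw [Function.iterate_succ_apply] at hk
    exact desc_of_exists hn parent hroot hpar ⟨k, hk⟩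

end DescLemmas


section MatrixAux
variable {K : Type*} [Field K] {α : Type*} [Fintype α] [DecidableEq α]

/-- Equivalence splitting off one point of a type. -/
def ptEquiv (i : α) : Unit ⊕ {a : α // a ≠ i} ≃ α where
  toFun x := Sum.elim (fun _ => i) Subtype.val x
  invFun a := if h : a = i then Sum.inl () else Sum.inr ⟨a, h⟩
  left_inv x := by
    rcases x with _ | ⟨a, h⟩
    · simp
    · simp [h]
  right_inv a := by by_cases h : a = i <;> simp [h]

theorem submatrix_ptEquiv (M : Matrix α α K) (i : α) :
    M.submatrix (ptEquiv i) (ptEquiv i) =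
      Matrix.fromBlocks (Matrix.of fun _ _ => M i i) (Matrix.of fun _ a => M i a.1)
        (Matrix.of fun a _ => M a.1 i)
        (M.submatrix (Subtype.val : {a // a ≠ i} → α) Subtype.val) := by
  ext x y
  rcases x with _ | a <;> rcases y with _ | b <;> rfl

theorem det_updateRow_single (M : Matrix α α K) (i : α) :
    (M.updateRow i (Pi.single i 1)).det =
      (M.submatrix (Subtype.val : {a // a ≠ i} → α) Subtype.val).det := by
  rw [← Matrix.det_submatrix_equiv_self (ptEquiv i)]
  have h : (M.updateRow i (Pi.single i 1)).submatrix (ptEquiv i) (ptEquiv i) =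
      Matrix.fromBlocks 1 0 (Matrix.of fun a _ => M a.1 i)
        (M.submatrix (Subtype.val : {a // a ≠ i} → α) Subtype.val) := by
    ext x y
    rcases x with _ | a <;> rcases y with _ | b
    · simp [ptEquiv, Matrix.one_apply]
    · simp [ptEquiv, Pi.single_eq_of_ne b.2]
    · simp [ptEquiv, Matrix.updateRow_ne a.2]
    · simp [ptEquiv, Matrix.updateRow_ne a.2]
  rw [h, Matrix.det_fromBlocks_zero₁₂, Matrix.det_one, one_mul]

theorem det_one_pt (M : Matrix α α K) (i : α)
    (hD : (M.submatrix (Subtype.val : {a // a ≠ i} → α) Subtype.val).det ≠ 0) :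
    M.det = (M.submatrix (Subtype.val : {a // a ≠ i} → α) Subtype.val).det *
      (M i i - ∑ a : {a // a ≠ i}, ∑ b : {a // a ≠ i},
        M i a.1 * (M.submatrix (Subtype.val : {a // a ≠ i} → α) Subtype.val)⁻¹ a b
          * M b.1 i) := by
  set D := M.submatrix (Subtype.val : {a // a ≠ i} → α) Subtype.val with hDdef
  have : Invertible D := D.invertibleOfIsUnitDet (isUnit_iff_ne_zero.2 hD)
  rw [← Matrix.det_submatrix_equiv_self (ptEquiv i) M, submatrix_ptEquiv,
    Matrix.det_fromBlocks₂₂]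
  congr 1
  rw [Matrix.det_unique]
  simp only [Matrix.sub_apply, Matrix.of_apply]
  congr 1
  simp_rw [Matrix.mul_apply, Finset.sum_mul]
  rw [Finset.sum_comm]
  simp_rw [Matrix.of_apply, ← hDdef, Matrix.invOf_eq_nonsing_inv]

theorem blockDiagonal'_inverse {o : Type*} [Fintype o] [DecidableEq o] {m' : o → Type*}
    [∀ i, Fintype (m' i)] [∀ i, DecidableEq (m' i)]
    (M : ∀ i, Matrix (m' i) (m' i) K) (h : ∀ i, (M i).det ≠ 0) :
    (Matrix.blockDiagonal' M)⁻¹ = Matrix.blockDiagonal' fun i => (M i)⁻¹ := by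
  apply Matrix.inv_eq_right_inv
  rw [← Matrix.blockDiagonal'_mul]
  have : (fun k => M k * (M k)⁻¹) = (1 : ∀ i, Matrix (m' i) (m' i) K) := by
    funext k
    exact Matrix.mul_nonsing_inv _ (isUnit_iff_ne_zero.2 (h k))
  rw [this, Matrix.blockDiagonal'_one]

end MatrixAux

section EntM
variable {n : ℕ} (parent : Fin n → Fin n)

noncomputable def ent (a b : Fin n) : RatFunc ℝ :=
  (if a = b then RatFunc.X else 0) - algebraMap ℝ (RatFunc ℝ) (adjMat n parent a b)

noncomputable def entM {α : Type} (v : α → Fin n) : Matrix α α (RatFunc ℝ) :=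
  Matrix.of fun a b => ent parent (v a) (v b)

theorem adjMat_symm (a b : Fin n) : adjMat n parent a b = adjMat n parent b a := by
  unfold adjMat
  by_cases h : (parent a = b ∧ a ≠ b) ∨ (parent b = a ∧ a ≠ b)
  · rw [if_pos h, if_pos ?_]
    rcases h with ⟨h1, h2⟩ | ⟨h1, h2⟩
    · exact Or.inr ⟨h1, h2.symm⟩
    · exact Or.inl ⟨h1, h2.symm⟩
  · rw [if_neg h, if_neg ?_]
    intro hc
    rcases hc with ⟨h1, h2⟩ | ⟨h1, h2⟩
    · exact h (Or.inr ⟨h1, h2.symm⟩)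
    · exact h (Or.inl ⟨h1, h2.symm⟩)

theorem ent_offdiag {a b : Fin n} (h : a ≠ b) :
    ent parent a b = -(algebraMap ℝ (RatFunc ℝ) (adjMat n parent a b)) := by
  simp [ent, h]

theorem ent_diag_of_not_adj {a : Fin n} : ent parent a a = RatFunc.X := by
  simp [ent, adjMat]

theorem det_entM_subtype (p : Fin n → Prop) [DecidablePred p] :
    (entM parent (Subtype.val : {j // p j} → Fin n)).det =
      algebraMap (Polynomial ℝ) (RatFunc ℝ) (subCharPoly n parent p) := by
  rw [subCharPoly, Matrix.charpoly, RingHom.map_det]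
  congr 1
  ext a b
  by_cases h : a = b
  · subst h
    simp only [RingHom.mapMatrix_apply, Matrix.map_apply, Matrix.charmatrix_apply_eq,
      Matrix.submatrix_apply, map_sub, entM, Matrix.of_apply, ent, if_pos rfl,
      RatFunc.algebraMap_X, RatFunc.algebraMap_C, ← RatFunc.algebraMap_eq_C, if_true]
  · have h' : a.1 ≠ b.1 := fun hv => h (Subtype.ext hv)
    simp only [RingHom.mapMatrix_apply, Matrix.map_apply, Matrix.charmatrix_apply_ne _ _ _ h,
      Matrix.submatrix_apply, map_neg, entM, Matrix.of_apply, ent_offdiag parent h',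
      RatFunc.algebraMap_C, ← RatFunc.algebraMap_eq_C]

theorem det_entM_ne_zero (p : Fin n → Prop) [DecidablePred p] :
    (entM parent (Subtype.val : {j // p j} → Fin n)).det ≠ 0 := by
  rw [det_entM_subtype]
  exact RatFunc.algebraMap_ne_zero (Matrix.charpoly_monic _).ne_zero

theorem det_entM_comp {α β : Type} [Fintype α] [DecidableEq α] [Fintype β] [DecidableEq β]
    (v : α → Fin n) (e : β ≃ α) :
    (entM parent (v ∘ e)).det = (entM parent v).det := by
  rw [show entM parent (v ∘ e) = (entM parent v).submatrix e e from rfl,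
    Matrix.det_submatrix_equiv_self]

end EntM

section Children
variable {n : ℕ} (hn : 0 < n) (parent : Fin n → Fin n)
  (hroot : parent ⟨0, hn⟩ = ⟨0, hn⟩) (hpar : ∀ j : Fin n, j ≠ ⟨0, hn⟩ → parent j < j)
  (i : Fin n)

/-- The child of `i` that `j` lies under. -/
noncomputable def childOf (j : {j : Fin n // Desc n parent i j ∧ j ≠ i}) :
    {c : Fin n // parent c = i ∧ i < c} :=
  ⟨(desc_ne_exists_child hn parent hroot hpar j.2.1 j.2.2).choose,
   (desc_ne_exists_child hn parent hroot hpar j.2.1 j.2.2).choose_spec.1,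
   (desc_ne_exists_child hn parent hroot hpar j.2.1 j.2.2).choose_spec.2.1⟩

theorem childOf_desc (j : {j : Fin n // Desc n parent i j ∧ j ≠ i}) :
    Desc n parent (childOf hn parent hroot hpar i j).1 j.1 :=
  (desc_ne_exists_child hn parent hroot hpar j.2.1 j.2.2).choose_spec.2.2

theorem childOf_eq (j : {j : Fin n // Desc n parent i j ∧ j ≠ i})
    (c : {c : Fin n // parent c = i ∧ i < c}) (hd : Desc n parent c.1 j.1) :
    childOf hn parent hroot hpar i j = c :=
  Subtype.ext (desc_child_unique hn parent hroot hpar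
    (childOf hn parent hroot hpar i j).2.1 (childOf hn parent hroot hpar i j).2.2
    c.2.1 c.2.2 (childOf_desc hn parent hroot hpar i j) hd)

/-- The subtree on the strict descendants of `i` splits as a disjoint union of
the subtrees rooted at the children of `i`. -/
noncomputable def treeEquiv :
    {j : Fin n // Desc n parent i j ∧ j ≠ i} ≃
      Σ c : {c : Fin n // parent c = i ∧ i < c}, {j : Fin n // Desc n parent c.1 j} where
  toFun j := ⟨childOf hn parent hroot hpar i j, ⟨j.1, childOf_desc hn parent hroot hpar i j⟩⟩
  invFun x := ⟨x.2.1, desc_of_child hn parent hroot hpar x.1.2.1 x.1.2.2 x.2.2⟩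
  left_inv j := rfl
  right_inv x := by
    obtain ⟨c, j, hj⟩ := x
    have key : ∀ (c c' : {c : Fin n // parent c = i ∧ i < c})
        (hc : Desc n parent c.1 j) (hc' : Desc n parent c'.1 j), c = c' →
        (⟨c, ⟨j, hc⟩⟩ : Σ c : {c : Fin n // parent c = i ∧ i < c},
          {j : Fin n // Desc n parent c.1 j}) = ⟨c', ⟨j, hc'⟩⟩ := by
      rintro c c' hc hc' rfl; rfl
    exact key _ _ _ _ (childOf_eq hn parent hroot hpar i _ c hj)

theorem ent_cross (a b : {j : Fin n // Desc n parent i j ∧ j ≠ i})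
    (h : childOf hn parent hroot hpar i a ≠ childOf hn parent hroot hpar i b) :
    ent parent a.1 b.1 = 0 := by
  have hab : a.1 ≠ b.1 := fun hv => h (by rw [show a = b from Subtype.ext hv])
  rw [ent_offdiag parent hab]
  suffices hz : adjMat n parent a.1 b.1 = 0 by rw [hz, map_zero, neg_zero]
  unfold adjMat
  rw [if_neg]
  rintro (⟨h1, -⟩ | ⟨h1, -⟩)
  · -- parent a = b
    by_cases hac : a.1 = (childOf hn parent hroot hpar i a).1
    · exact b.2.2 (by rw [← h1, hac, (childOf hn parent hroot hpar i a).2.1])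
    · have hd2 : Desc n parent (childOf hn parent hroot hpar i a).1 b.1 := by
        rw [← h1]
        exact desc_parent hn parent hroot hpar
          (childOf_desc hn parent hroot hpar i a) hac
      exact h (childOf_eq hn parent hroot hpar i b _ hd2).symm
  · -- parent b = a
    by_cases hbc : b.1 = (childOf hn parent hroot hpar i b).1
    · exact a.2.2 (by rw [← h1, hbc, (childOf hn parent hroot hpar i b).2.1])
    · have hd2 : Desc n parent (childOf hn parent hroot hpar i b).1 a.1 := by
        rw [← h1]
        exact desc_parent hn parent hroot hpar
          (childOf_desc hn parent hroot hpar i b) hbc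
      exact h (childOf_eq hn parent hroot hpar i a _ hd2)

include hroot hpar

theorem adj_i_vertex (a : Fin n) (ha : Desc n parent i a) (hne : a ≠ i) :
    adjMat n parent i a = if parent a = i then 1 else 0 := by
  have hpi : parent i ≠ a := by
    intro h
    have hle : i ≤ a := desc_le hn parent hroot hpar ha
    by_cases hri : i = ⟨0, hn⟩
    · rw [hri, hroot] at h
      exact hne (h ▸ hri.symm)
    · have hlt := hpar i hri
      rw [h] at hlt
      exact absurd (lt_of_lt_of_le hlt hle) (lt_irrefl a)
  unfold adjMat
  by_cases hp : parent a = i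
  · rw [if_pos (Or.inr ⟨hp, Ne.symm hne⟩), if_pos hp]
  · rw [if_neg ?_, if_neg hp]
    rintro (⟨h1, -⟩ | ⟨h1, -⟩)
    exacts [hpi h1, hp h1]

theorem ent_i_vertex (a : Fin n) (ha : Desc n parent i a) (hne : a ≠ i) :
    ent parent i a = if parent a = i then -1 else 0 := by
  rw [ent_offdiag parent (Ne.symm hne), adj_i_vertex hn parent hroot hpar i a ha hne]
  split_ifs <;> simp

theorem ent_vertex_i (a : Fin n) (ha : Desc n parent i a) (hne : a ≠ i) :
    ent parent a i = if parent a = i then -1 else 0 := by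
  rw [ent_offdiag parent hne, adjMat_symm, adj_i_vertex hn parent hroot hpar i a ha hne]
  split_ifs <;> simp

omit hroot hpar in
/-- Equivalence between the strict subtree as plain subtype and as subtype of the subtree. -/
def minorEquiv (h0 : Desc n parent i i) :
    {j : Fin n // Desc n parent i j ∧ j ≠ i} ≃
      {a : {j : Fin n // Desc n parent i j} // a ≠ ⟨i, h0⟩} where
  toFun j := ⟨⟨j.1, j.2.1⟩, fun hc => j.2.2 (congrArg Subtype.val hc)⟩
  invFun a := ⟨a.1.1, a.1.2, fun hc => a.2 (Subtype.ext hc)⟩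
  left_inv j := rfl
  right_inv a := rfl

omit hroot hpar in
theorem det_entM_minor (h0 : Desc n parent i i) :
    ((entM parent (Subtype.val : {j // Desc n parent i j} → Fin n)).submatrix
        (Subtype.val : {a : {j // Desc n parent i j} // a ≠ ⟨i, h0⟩} → _) Subtype.val).det =
      (entM parent (Subtype.val : {j // Desc n parent i j ∧ j ≠ i} → Fin n)).det := by
  have h1 : ((entM parent (Subtype.val : {j // Desc n parent i j} → Fin n)).submatrix
      (Subtype.val : {a : {j // Desc n parent i j} // a ≠ ⟨i, h0⟩} → _) Subtype.val) =
      entM parent (fun a : {a : {j // Desc n parent i j} // a ≠ ⟨i, h0⟩} => a.1.1) := rfl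
  rw [h1, ← det_entM_comp parent (fun a : {a : {j // Desc n parent i j} // a ≠ ⟨i, h0⟩} => a.1.1)
    (minorEquiv parent i h0)]
  rfl

end Children

theorem entM_apply {n : ℕ} (parent : Fin n → Fin n) {α : Type} (v : α → Fin n) (a b : α) :
    entM parent v a b = ent parent (v a) (v b) := rfl

set_option synthInstance.maxHeartbeats 400000 in
theorem aux_det (n : ℕ) (hn : 0 < n) (parent : Fin n → Fin n)
    (hroot : parent ⟨0, hn⟩ = ⟨0, hn⟩)
    (hpar : ∀ j : Fin n, j ≠ ⟨0, hn⟩ → parent j < j) :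
    ∀ (m : ℕ) (i : Fin n), n - i.1 ≤ m →
    (entM parent (Subtype.val : {j // Desc n parent i j} → Fin n)).det =
      dRat n parent i *
        (entM parent (Subtype.val : {j // Desc n parent i j ∧ j ≠ i} → Fin n)).det := by
  intro m
  induction m with
  | zero =>
    intro i h
    have := i.isLt
    omega
  | succ m IH =>
    intro i him
    classical
    have h0 : Desc n parent i i := desc_refl hn parent hroot hpar i
    set ι : {j // Desc n parent i j} := ⟨i, h0⟩ with hιdef
    set M : Matrix {j // Desc n parent i j} {j // Desc n parent i j} (RatFunc ℝ) :=
      entM parent (Subtype.val : {j // Desc n parent i j} → Fin n) with hMdef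
    have hDdet : ((M.submatrix (Subtype.val : {a // a ≠ ι} → _) Subtype.val)).det =
        (entM parent (Subtype.val : {j // Desc n parent i j ∧ j ≠ i} → Fin n)).det :=
      det_entM_minor parent i h0
    have hDne : ((M.submatrix (Subtype.val : {a // a ≠ ι} → _) Subtype.val)).det ≠ 0 := by
      rw [hDdet]
      exact det_entM_ne_zero parent _
    have hschur := det_one_pt M ι hDne
    have hblockent : ∀ (x y : Σ c : {c : Fin n // parent c = i ∧ i < c},
        {j // Desc n parent c.1 j}), x.1 = y.1 →
        Matrix.blockDiagonal'
          (fun c : {c : Fin n // parent c = i ∧ i < c} =>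
            entM parent (Subtype.val : {j // Desc n parent c.1 j} → Fin n)) x y =
          ent parent x.2.1 y.2.1 := by
      rintro ⟨c, x⟩ ⟨c', y⟩ h
      dsimp at h
      subst h
      rw [Matrix.blockDiagonal'_apply_eq]
      rfl
    set E : {a : {j // Desc n parent i j} // a ≠ ι} ≃
        Σ c : {c : Fin n // parent c = i ∧ i < c}, {j // Desc n parent c.1 j} :=
      (minorEquiv parent i h0).symm.trans (treeEquiv hn parent hroot hpar i) with hEdef
    have hblock : M.submatrix (Subtype.val : {a // a ≠ ι} → _) Subtype.val =
        (Matrix.blockDiagonal'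
          (fun c : {c : Fin n // parent c = i ∧ i < c} =>
            entM parent (Subtype.val : {j // Desc n parent c.1 j} → Fin n))).submatrix E E := by
      ext a b
      rw [Matrix.submatrix_apply, Matrix.submatrix_apply]
      by_cases h : (E a).1 = (E b).1
      · rw [hblockent _ _ h]
        rfl
      · rw [Matrix.blockDiagonal'_apply_ne _ _ _ h]
        exact ent_cross hn parent hroot hpar i ((minorEquiv parent i h0).symm a)
          ((minorEquiv parent i h0).symm b) h
    have hDinv : (M.submatrix (Subtype.val : {a // a ≠ ι} → _) Subtype.val)⁻¹ =
        (Matrix.blockDiagonal'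
          (fun c : {c : Fin n // parent c = i ∧ i < c} =>
            (entM parent (Subtype.val : {j // Desc n parent c.1 j} → Fin n))⁻¹)).submatrix E E := by
      rw [hblock]
      apply Matrix.inv_eq_right_inv
      rw [Matrix.submatrix_mul_equiv, ← Matrix.blockDiagonal'_mul]
      have hone : (fun c : {c : Fin n // parent c = i ∧ i < c} =>
          entM parent (Subtype.val : {j // Desc n parent c.1 j} → Fin n) *
            (entM parent (Subtype.val : {j // Desc n parent c.1 j} → Fin n))⁻¹) =
          (1 : ∀ c : {c : Fin n // parent c = i ∧ i < c},
            Matrix {j // Desc n parent c.1 j} {j // Desc n parent c.1 j} (RatFunc ℝ)) := by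
        funext c
        exact Matrix.mul_nonsing_inv _ (isUnit_iff_ne_zero.2 (det_entM_ne_zero parent _))
      rw [hone, Matrix.blockDiagonal'_one, Matrix.submatrix_one_equiv]
    have hinv_entry : ∀ c : {c : Fin n // parent c = i ∧ i < c},
        (entM parent (Subtype.val : {j // Desc n parent c.1 j} → Fin n))⁻¹
            ⟨c.1, desc_refl hn parent hroot hpar c.1⟩
            ⟨c.1, desc_refl hn parent hroot hpar c.1⟩ =
          (dRat n parent c.1)⁻¹ := by
      intro c
      have hlt : (i : ℕ) < c.1.1 := c.2.2
      have hcn := c.1.isLt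
      have hIH := IH c.1 (by omega)
      have hmne := det_entM_ne_zero parent
        (fun j => Desc n parent c.1 j ∧ j ≠ c.1)
      rw [Matrix.inv_def, Matrix.smul_apply, Matrix.adjugate_apply,
        det_updateRow_single, det_entM_minor parent c.1
          (desc_refl hn parent hroot hpar c.1), Ring.inverse_eq_inv, hIH,
        smul_eq_mul, mul_inv]
      rw [mul_assoc, inv_mul_cancel₀ hmne, mul_one]
    have hrow : ∀ a : {a // a ≠ ι}, (∑ b : {a // a ≠ ι},
        M ι a.1 * (M.submatrix (Subtype.val : {a // a ≠ ι} → _) Subtype.val)⁻¹ a b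
          * M b.1 ι) =
        if parent a.1.1 = i then (dRat n parent a.1.1)⁻¹ else 0 := by
      intro a
      have hanei : a.1.1 ≠ i := fun hc => a.2 (Subtype.ext hc)
      by_cases hpa : parent a.1.1 = i
      · rw [if_pos hpa]
        have hlt : i < a.1.1 := child_lt hn parent hroot hpar hpa hanei
        have hca : childOf hn parent hroot hpar i ((minorEquiv parent i h0).symm a) =
            ⟨a.1.1, hpa, hlt⟩ :=
          childOf_eq hn parent hroot hpar i _ _ (desc_refl hn parent hroot hpar a.1.1)
        have hEa : E a = ⟨⟨a.1.1, hpa, hlt⟩,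
            ⟨a.1.1, desc_refl hn parent hroot hpar a.1.1⟩⟩ := by
          have key : ∀ (c c' : {c : Fin n // parent c = i ∧ i < c})
              (x : {j // Desc n parent c.1 j}) (x' : {j // Desc n parent c'.1 j}),
              c = c' → x.1 = x'.1 →
              (⟨c, x⟩ : Σ c : {c : Fin n // parent c = i ∧ i < c},
                {j // Desc n parent c.1 j}) = ⟨c', x'⟩ := by
            rintro c c' x x' rfl hx
            exact congrArg _ (Subtype.ext hx)
          exact key _ _ _ _ hca rfl
        rw [Fintype.sum_eq_single a]
        · have hmid : (M.submatrix (Subtype.val : {a // a ≠ ι} → _) Subtype.val)⁻¹ a a =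
              (dRat n parent a.1.1)⁻¹ := by
            rw [hDinv, Matrix.submatrix_apply, hEa, Matrix.blockDiagonal'_apply_eq]
            exact hinv_entry ⟨a.1.1, hpa, hlt⟩
          have hl : M ι a.1 = -1 := by
            show ent parent i a.1.1 = -1
            rw [ent_i_vertex hn parent hroot hpar i a.1.1 a.1.2 hanei, if_pos hpa]
          have hr : M a.1 ι = -1 := by
            show ent parent a.1.1 i = -1
            rw [ent_vertex_i hn parent hroot hpar i a.1.1 a.1.2 hanei, if_pos hpa]
          rw [hmid, hl, hr]
          ring
        · intro b hb
          have hbnei : b.1.1 ≠ i := fun hc => b.2 (Subtype.ext hc)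
          by_cases hcb : (E a).1 = (E b).1
          · by_cases hpb : parent b.1.1 = i
            · exfalso
              have hltb : i < b.1.1 := child_lt hn parent hroot hpar hpb hbnei
              have h2 : (E b).1 = ⟨b.1.1, hpb, hltb⟩ :=
                childOf_eq hn parent hroot hpar i _ _ (desc_refl hn parent hroot hpar b.1.1)
              have h1 : (E a).1 = ⟨a.1.1, hpa, hlt⟩ :=
                childOf_eq hn parent hroot hpar i _ _ (desc_refl hn parent hroot hpar a.1.1)
              have hv : a.1.1 = b.1.1 :=
                congrArg (Subtype.val : {c : Fin n // parent c = i ∧ i < c} → Fin n)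
                  (h1.symm.trans (hcb.trans h2))
              exact hb (Subtype.ext (Subtype.ext hv.symm))
            · have hz : M b.1 ι = 0 := by
                show ent parent b.1.1 i = 0
                rw [ent_vertex_i hn parent hroot hpar i b.1.1 b.1.2 hbnei, if_neg hpb]
              rw [hz, mul_zero]
          · rw [hDinv, Matrix.submatrix_apply, Matrix.blockDiagonal'_apply_ne _ _ _ hcb,
              mul_zero, zero_mul]
      · rw [if_neg hpa]
        apply Finset.sum_eq_zero
        intro b _
        have hz : M ι a.1 = 0 := by
          show ent parent i a.1.1 = 0
          rw [ent_i_vertex hn parent hroot hpar i a.1.1 a.1.2 hanei, if_neg hpa]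
        rw [hz, zero_mul, zero_mul]
    have hsum : (∑ a : {a // a ≠ ι}, ∑ b : {a // a ≠ ι},
          M ι a.1 * (M.submatrix (Subtype.val : {a // a ≠ ι} → _) Subtype.val)⁻¹ a b
            * M b.1 ι) =
        ∑ j ∈ (Finset.univ.filter fun j => parent j = i ∧ i < j).attach,
          (dRat n parent j.1)⁻¹ := by
      calc (∑ a : {a // a ≠ ι}, ∑ b : {a // a ≠ ι},
          M ι a.1 * (M.submatrix (Subtype.val : {a // a ≠ ι} → _) Subtype.val)⁻¹ a b
            * M b.1 ι)
          = ∑ a : {a // a ≠ ι},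
              (if parent a.1.1 = i then (dRat n parent a.1.1)⁻¹ else 0) :=
            Finset.sum_congr rfl (fun a _ => hrow a)
        _ = ∑ j : {j // Desc n parent i j ∧ j ≠ i},
              (if parent j.1 = i then (dRat n parent j.1)⁻¹ else 0) :=
            (Fintype.sum_equiv (minorEquiv parent i h0) _ _ (fun j => rfl)).symm
        _ = ∑ j ∈ Finset.univ.filter (fun j => Desc n parent i j ∧ j ≠ i),
              (if parent j = i then (dRat n parent j)⁻¹ else 0) :=
            (Finset.sum_subtype
              (Finset.univ.filter (fun j => Desc n parent i j ∧ j ≠ i))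
              (fun x => by simp)
              (fun j => if parent j = i then (dRat n parent j)⁻¹ else 0)).symm
        _ = ∑ j : Fin n, (if Desc n parent i j ∧ j ≠ i then
              (if parent j = i then (dRat n parent j)⁻¹ else 0) else 0) :=
            Finset.sum_filter _ _
        _ = ∑ j : Fin n, (if parent j = i ∧ i < j then (dRat n parent j)⁻¹ else 0) := by
            apply Finset.sum_congr rfl
            intro j _
            by_cases h1 : parent j = i
            · by_cases h2 : j = i
              · subst h2
                rw [if_neg (by simp), if_neg (by simp)]
              · have h3 : i < j := child_lt hn parent hroot hpar h1 h2
                rw [if_pos ⟨child_desc hn parent hroot hpar h1, h2⟩, if_pos h1,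
                  if_pos ⟨h1, h3⟩]
            · have hr : (if parent j = i ∧ i < j then (dRat n parent j)⁻¹ else 0) = 0 :=
                if_neg (fun hc => h1 hc.1)
              rw [hr]
              by_cases h2 : Desc n parent i j ∧ j ≠ i
              · rw [if_pos h2, if_neg h1]
              · rw [if_neg h2]
        _ = ∑ j ∈ Finset.univ.filter (fun j => parent j = i ∧ i < j),
              (dRat n parent j)⁻¹ := (Finset.sum_filter _ _).symm
        _ = ∑ j ∈ (Finset.univ.filter fun j => parent j = i ∧ i < j).attach,
              (dRat n parent j.1)⁻¹ := (Finset.sum_attach _ _).symm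
    have hMii : M ι ι = RatFunc.X := by
      show ent parent i i = RatFunc.X
      exact ent_diag_of_not_adj parent
    rw [hschur, hMii, hsum, hDdet]
    conv_rhs => rw [dRat]
    ring

/-- For every vertex `i` of a rooted tree, `d i = φ^{T(i)} / φ^{T(i) ∖ i}`,
where `T(i)` is the subtree rooted at `i` (the descendants of `i`) and `φ^G`
is the characteristic polynomial of the adjacency matrix. -/
theorem dRat_eq_charpoly_div (n : ℕ) (hn : 0 < n) (parent : Fin n → Fin n)
    (hroot : parent ⟨0, hn⟩ = ⟨0, hn⟩)
    (hpar : ∀ j : Fin n, j ≠ ⟨0, hn⟩ → parent j < j) (i : Fin n) :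
    dRat n parent i =
      algebraMap (Polynomial ℝ) (RatFunc ℝ)
          (subCharPoly n parent (fun j => Desc n parent i j))
        / algebraMap (Polynomial ℝ) (RatFunc ℝ)
          (subCharPoly n parent (fun j => Desc n parent i j ∧ j ≠ i)) := by
  have h := aux_det n hn parent hroot hpar n i (by omega)
  rw [det_entM_subtype parent (fun j => Desc n parent i j),
    det_entM_subtype parent (fun j => Desc n parent i j ∧ j ≠ i)] at h
  rw [eq_div_iff (RatFunc.algebraMap_ne_zero (Matrix.charpoly_monic _).ne_zero)]
  exact h.symm
end

section
/- Let T be a rooted tree and let d_i be the rational functions defined recursively by d_i(x) = x - Σ_{j child of i} 1/d_j(x) (with d_i(x) = x for leaves). Then for every θ that is not a pole of any d_j involved in the recursion for d_i, the derivative satisfies d_i'(θ) ≥ 1. -/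
open Finset

/-!
Induct down the tree. For a child `j` of `i`, `d j θ ≠ 0` and inductively `d_j'(θ) ≥ 1`, so
`(d j)⁻¹` has derivative `-d_j'(θ) / d_j(θ)² ≤ 0` and `d i = id - ∑ (d j)⁻¹` has derivative
`1 + ∑ d_j'(θ) / d_j(θ)² ≥ 1`. Labels strictly increase along a chain of children, so a chain
from `i` to `j` has at most `j - i < n` steps and `j` is a descendant in the sense of `Desc`.
-/

/-- The Jacobs–Trevisan function of vertex `i` of a rooted tree on `Fin n`
given by a parent map (root `0`, `parent j < j` for `j ≠ 0`), evaluated at a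
real number:
`d i θ = θ - ∑_{j child of i} (d j θ)⁻¹` (with `(0 : ℝ)⁻¹ = 0` by convention). -/
noncomputable def dReal (n : ℕ) (parent : Fin n → Fin n) (i : Fin n) (θ : ℝ) : ℝ :=
  θ - ∑ j ∈ (Finset.univ.filter fun j => parent j = i ∧ i < j).attach,
      (dReal n parent j.1 θ)⁻¹
termination_by n - i.1
decreasing_by
  have hj := j.2
  simp only [Finset.mem_filter, Finset.mem_univ, true_and] at hj
  have := j.1.isLt
  omega

-- Reducible, so that `univ.filter (IsChild parent i)` is literally the index set in `dReal`.
abbrev IsChild {n : ℕ} (parent : Fin n → Fin n) (i j : Fin n) : Prop :=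
  parent j = i ∧ i < j

theorem exists_iterate_eq_of_transGen_isChild {n : ℕ} {parent : Fin n → Fin n} {i j : Fin n}
    (h : Relation.TransGen (IsChild parent) i j) :
    ∃ k, 0 < k ∧ i.1 + k ≤ j.1 ∧ parent^[k] j = i := by
  induction h with
  | single hij => exact ⟨1, one_pos, hij.2, hij.1⟩
  | tail _ hbc ih =>
    obtain ⟨k, hk, hle, hk_eq⟩ := ih
    refine ⟨k + 1, k.succ_pos, ?_, ?_⟩
    · have := Fin.lt_def.mp hbc.2
      omega
    · rw [Function.iterate_succ_apply, hbc.1, hk_eq]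

theorem desc_of_transGen_isChild {n : ℕ} {parent : Fin n → Fin n} {i j : Fin n}
    (h : Relation.TransGen (IsChild parent) i j) : Desc n parent i j ∧ j ≠ i := by
  obtain ⟨k, hk, hle, hk_eq⟩ := exists_iterate_eq_of_transGen_isChild h
  refine ⟨⟨k, mem_range.mpr (by omega), hk_eq⟩, fun hji => ?_⟩
  rw [hji] at hle
  omega

theorem dReal_eq_sub_sum_inv (n : ℕ) (parent : Fin n → Fin n) (i : Fin n) (θ : ℝ) :
    dReal n parent i θ = θ - ∑ j ∈ univ.filter (IsChild parent i), (dReal n parent j θ)⁻¹ := by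
  rw [dReal]
  exact congrArg (θ - ·)
    (sum_attach (univ.filter (IsChild parent i)) fun j => (dReal n parent j θ)⁻¹)

theorem exists_hasDerivAt_sub_sum_inv_ge_one {ι : Type*} (s : Finset ι) (g : ι → ℝ → ℝ)
    (θ : ℝ) (hg : ∀ j ∈ s, g j θ ≠ 0 ∧ ∃ m, 0 ≤ m ∧ HasDerivAt (g j) m θ) :
    ∃ m : ℝ, 1 ≤ m ∧ HasDerivAt (fun t => t - ∑ j ∈ s, (g j t)⁻¹) m θ := by
  choose! hne m hm hderiv using hg
  refine ⟨1 + ∑ j ∈ s, m j / g j θ ^ 2, ?_, ?_⟩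
  · have : 0 ≤ ∑ j ∈ s, m j / g j θ ^ 2 :=
      sum_nonneg fun j hj => div_nonneg (hm j hj) (sq_nonneg _)
    linarith
  · have hinv : HasDerivAt (fun t => ∑ j ∈ s, (g j t)⁻¹) (∑ j ∈ s, -m j / g j θ ^ 2) θ :=
      HasDerivAt.fun_sum fun j hj => (hderiv j hj).inv (hne j hj)
    refine ((hasDerivAt_id' θ).fun_sub hinv).congr_deriv ?_
    simp only [neg_div, sum_neg_distrib, sub_neg_eq_add]

theorem exists_hasDerivAt_dReal_ge_one {n : ℕ} (parent : Fin n → Fin n) (θ : ℝ) (i : Fin n)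
    (hnz : ∀ j, Relation.TransGen (IsChild parent) i j → dReal n parent j θ ≠ 0) :
    ∃ m : ℝ, 1 ≤ m ∧ HasDerivAt (dReal n parent i) m θ := by
  induction i using WellFoundedGT.induction with
  | _ i ih =>
    have hfun : dReal n parent i =
        fun t => t - ∑ j ∈ univ.filter (IsChild parent i), (dReal n parent j t)⁻¹ :=
      funext (dReal_eq_sub_sum_inv n parent i)
    rw [hfun]
    refine exists_hasDerivAt_sub_sum_inv_ge_one _ _ θ fun j hj => ?_
    have hij : IsChild parent i j := (mem_filter.mp hj).2
    refine ⟨hnz j (.single hij), ?_⟩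
    obtain ⟨m, hm, hderiv⟩ := ih j hij.2 fun k hjk => hnz k (.head hij hjk)
    exact ⟨m, zero_le_one.trans hm, hderiv⟩

theorem dReal_deriv_ge_one_general (n : ℕ) (parent : Fin n → Fin n)
    (i : Fin n) (θ : ℝ)
    (hnz : ∀ j : Fin n, Desc n parent i j → j ≠ i → dReal n parent j θ ≠ 0) :
    ∃ m : ℝ, 1 ≤ m ∧ HasDerivAt (fun t => dReal n parent i t) m θ :=
  exists_hasDerivAt_dReal_ge_one parent θ i fun j hij =>
    (desc_of_transGen_isChild hij).elim (hnz j)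

/-- If `θ` is not a pole of any function involved in the recursion for `d i`
(no strict descendant `j` of `i` has `d j θ = 0`), then `d i` is differentiable
at `θ` with derivative at least `1`. -/
theorem dReal_deriv_ge_one (n : ℕ) (hn : 0 < n) (parent : Fin n → Fin n)
    (hroot : parent ⟨0, hn⟩ = ⟨0, hn⟩)
    (hpar : ∀ j : Fin n, j ≠ ⟨0, hn⟩ → parent j < j)
    (i : Fin n) (θ : ℝ)
    (hnz : ∀ j : Fin n, Desc n parent i j → j ≠ i → dReal n parent j θ ≠ 0) :
    ∃ m : ℝ, 1 ≤ m ∧ HasDerivAt (fun t => dReal n parent i t) m θ :=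
  dReal_deriv_ge_one_general n parent i θ hnz
end

section
/- Let T be a rooted tree with root 1, and suppose θ is a real number such that d_1(θ) = 0, where d_i are the recursively defined rational functions d_i(x) = x - Σ_{j child of i} 1/d_j(x). Then θ is an eigenvalue of the adjacency matrix of T. -/
open Finset

/-- The candidate eigenvector: value `1` at the root, and
`v j = v (parent j) / d j` at every non-root vertex. -/
noncomputable def vecAux (n : ℕ) (parent : Fin n → Fin n) (θ : ℝ) (i : Fin n) : ℝ :=
  if h : (parent i).1 < i.1 then
    vecAux n parent θ (parent i) / dReal n parent i θ
  else 1
termination_by i.1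

/-- If `θ` is not a pole (no non-root vertex `j` has `d j θ = 0`) and the value
at the root satisfies `d root θ = 0`, then `θ` is an eigenvalue of the
adjacency matrix of the tree: `det (θ I - A(T)) = 0`. -/
theorem dReal_root_zero_eigenvalue (n : ℕ) (hn : 0 < n) (parent : Fin n → Fin n)
    (hroot : parent ⟨0, hn⟩ = ⟨0, hn⟩)
    (hpar : ∀ j : Fin n, j ≠ ⟨0, hn⟩ → parent j < j) (θ : ℝ)
    (hnz : ∀ j : Fin n, j ≠ ⟨0, hn⟩ → dReal n parent j θ ≠ 0)
    (h0 : dReal n parent ⟨0, hn⟩ θ = 0) :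
    Matrix.det (θ • (1 : Matrix (Fin n) (Fin n) ℝ) - adjMat n parent) = 0 := by
  set root : Fin n := ⟨0, hn⟩ with hrootdef
  set v : Fin n → ℝ := vecAux n parent θ with hv
  have hvroot : v root = 1 := by
    rw [hv, vecAux]
    have : ¬ (parent root).1 < root.1 := by rw [hroot]; exact lt_irrefl _
    simp [this]
  -- value of v at a non-root vertex
  have hvne : ∀ j : Fin n, j ≠ root → v j = v (parent j) / dReal n parent j θ := by
    intro j hj
    rw [hv]
    conv_lhs => rw [vecAux]
    have : (parent j).1 < j.1 := hpar j hj
    simp [this]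
  rw [← Matrix.exists_mulVec_eq_zero_iff]
  refine ⟨v, ?_, ?_⟩
  · intro hcon
    have := congrFun hcon root
    rw [hvroot] at this
    simp at this
  · funext i
    have key : ∀ j : Fin n, ((parent j = i ∧ i ≠ j) ↔ (parent j = i ∧ i < j)) := by
      intro j
      constructor
      · rintro ⟨h1, h2⟩
        refine ⟨h1, ?_⟩
        have hjroot : j ≠ root := by
          intro hc
          subst hc
          rw [hroot] at h1
          exact h2 h1.symm
        have := hpar j hjroot
        rw [h1] at this
        exact this
      · rintro ⟨h1, h2⟩
        exact ⟨h1, ne_of_lt h2⟩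
    -- split the adjacency row
    have hA : ∀ j : Fin n, adjMat n parent i j * v j =
        (if parent i = j ∧ i ≠ j then v j else 0) +
        (if parent j = i ∧ i < j then v j else 0) := by
      intro j
      rw [adjMat]
      by_cases h1 : parent i = j ∧ i ≠ j
      · have h2 : ¬ (parent j = i ∧ i < j) := by
          rintro ⟨ha, hb⟩
          have hiroot : i ≠ root := by
            intro hc; rw [hc, hroot] at h1; exact h1.2 h1.1
          have := hpar i hiroot
          rw [h1.1] at this
          exact absurd (lt_trans hb this) (lt_irrefl i)
        have h2' : ¬ (parent j = i ∧ i ≠ j) := fun hc => h2 ((key j).mp hc)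
        simp [h1, h2, h2']
      · by_cases h3 : parent j = i ∧ i < j
        · have h3' : parent j = i ∧ i ≠ j := (key j).mpr h3
          have h4 : ¬ parent i = j := fun hc => h1 ⟨hc, h3'.2⟩
          simp [h4, h3, h3']
        · have h3' : ¬ (parent j = i ∧ i ≠ j) := fun hc => h3 ((key j).mp hc)
          simp [h1, h3, h3']
    -- children sum
    have hchild : ∑ j : Fin n, (if parent j = i ∧ i < j then v j else 0) =
        v i * (θ - dReal n parent i θ) := by
      have hd : dReal n parent i θ = θ - ∑ j ∈ (Finset.univ.filter
          fun j => parent j = i ∧ i < j).attach, (dReal n parent j.1 θ)⁻¹ := by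
        rw [dReal]
      have hs : ∑ j ∈ (Finset.univ.filter fun j => parent j = i ∧ i < j).attach,
          (dReal n parent j.1 θ)⁻¹ =
          ∑ j ∈ Finset.univ.filter (fun j => parent j = i ∧ i < j),
          (dReal n parent j θ)⁻¹ := Finset.sum_attach _ fun j => (dReal n parent j θ)⁻¹
      rw [Finset.sum_ite, Finset.sum_const_zero, add_zero]
      have hval : ∀ j ∈ Finset.univ.filter (fun j => parent j = i ∧ i < j),
          v j = v i * (dReal n parent j θ)⁻¹ := by
        intro j hj
        simp only [Finset.mem_filter, Finset.mem_univ, true_and] at hj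
        have hjroot : j ≠ root := by
          intro hc
          rw [hc] at hj
          exact absurd hj.2 (by simp [hrootdef]; omega)
        rw [hvne j hjroot, hj.1, div_eq_mul_inv]
      rw [Finset.sum_congr rfl hval, ← Finset.mul_sum, ← hs]
      rw [hd]
      ring
    -- parent sum
    have hparent : ∑ j : Fin n, (if parent i = j ∧ i ≠ j then v j else 0) =
        if i = root then 0 else v (parent i) := by
      by_cases hi : i = root
      · rw [if_pos hi]
        refine Finset.sum_eq_zero fun j _ => ?_
        rw [if_neg]
        rintro ⟨ha, hb⟩
        rw [hi, hroot] at ha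
        exact hb (by rw [hi, ha])
      · have hlt := hpar i hi
        have : ∀ j : Fin n, (parent i = j ∧ i ≠ j) ↔ j = parent i := by
          intro j
          constructor
          · rintro ⟨ha, _⟩; exact ha.symm
          · rintro rfl
            exact ⟨rfl, fun hc => absurd hlt (by rw [← hc]; exact lt_irrefl i)⟩
        simp only [this]
        rw [Finset.sum_ite_eq' Finset.univ (parent i) v]
        simp [hi]
    show ∑ j, (θ • (1 : Matrix (Fin n) (Fin n) ℝ) - adjMat n parent) i j * v j = 0
    have hrow : ∀ j : Fin n, (θ • (1 : Matrix (Fin n) (Fin n) ℝ) - adjMat n parent) i j * v j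
        = (if i = j then θ * v j else 0) - adjMat n parent i j * v j := by
      intro j
      by_cases h : i = j <;>
        simp [Matrix.sub_apply, Matrix.smul_apply, Matrix.one_apply, h, sub_mul]
    rw [Finset.sum_congr rfl fun j _ => hrow j, Finset.sum_sub_distrib]
    rw [Finset.sum_ite_eq Finset.univ i (fun j => θ * v j)]
    simp only [Finset.mem_univ, if_true]
    rw [Finset.sum_congr rfl fun j _ => hA j, Finset.sum_add_distrib, hchild, hparent]
    by_cases hi : i = root
    · rw [hi, h0, hvroot]
      simp
    · have hd := hnz i hi
      rw [if_neg hi, hvne i hi]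
      field_simp
      ring
end

section
/- Let T be a tree containing a subdivided edge with 7 vertices. Then T is not an integral tree; that is, at least one eigenvalue of the adjacency matrix of T is irrational or non-integral. -/
/-!
Let `A` be the adjacency matrix and `e` the indicator vector of the middle vertex `v 3` of the
subdivided edge. As `v 1, …, v 5` have degree 2, the walks of length at most 3 from `v 3` stay
on the path, so `‖A e‖² = 2`, `‖A² e‖² = 6`, `‖A³ e‖² = 20`, and for
`p = X⁶ - 5X⁴ + 4X² = X²(X² - 1)(X² - 4)` we get `⟪e, p(A) e⟫ = 20 - 30 + 8 = -2 < 0`.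
But `p ≥ 0` at every integer, so if all eigenvalues of `A` were integers then `p(A)` would be
positive semidefinite.
-/

open Polynomial Matrix
open scoped MatrixOrder ComplexOrder

namespace SimpleGraph

variable {V : Type*} [Fintype V] [DecidableEq V] {G : SimpleGraph V} [DecidableRel G.Adj]

theorem neighborFinset_eq_pair_of_degree_eq_two {u a b : V} (hu : G.degree u = 2)
    (ha : G.Adj u a) (hb : G.Adj u b) (hab : a ≠ b) : G.neighborFinset u = {a, b} :=
  (Finset.eq_of_subset_of_card_le (by simp [Finset.insert_subset_iff, ha, hb])
    (by rw [Finset.card_pair hab, card_neighborFinset_eq_degree, hu])).symm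

variable (G) in
theorem adjMatrix_mulVec_single_one (R : Type*) [NonAssocSemiring R] (u : V) :
    G.adjMatrix R *ᵥ Pi.single u 1 = ∑ w ∈ G.neighborFinset u, Pi.single w 1 := by
  ext x
  simp [Finset.sum_apply, Pi.single_apply, adj_comm]

theorem adjMatrix_mulVec_single_one_of_degree_eq_two (R : Type*) [NonAssocSemiring R]
    {u a b : V} (hu : G.degree u = 2) (ha : G.Adj u a) (hb : G.Adj u b) (hab : a ≠ b) :
    G.adjMatrix R *ᵥ Pi.single u 1 = Pi.single a 1 + Pi.single b 1 := by
  rw [adjMatrix_mulVec_single_one, neighborFinset_eq_pair_of_degree_eq_two hu ha hb hab,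
    Finset.sum_pair hab]

theorem adjMatrix_mulVec_single_one_of_internal (R : Type*) [NonAssocSemiring R] {n : ℕ}
    {v : Fin (n + 2) → V} (hinj : Function.Injective v)
    (hadj : ∀ i : Fin (n + 1), G.Adj (v i.castSucc) (v i.succ))
    (hdeg : ∀ i : Fin (n + 2), 0 < i.1 → i.1 < n + 1 → G.degree (v i) = 2) (j : Fin n) :
    G.adjMatrix R *ᵥ Pi.single (v j.succ.castSucc) 1 =
      Pi.single (v j.castSucc.castSucc) 1 + Pi.single (v j.succ.succ) 1 := by
  refine adjMatrix_mulVec_single_one_of_degree_eq_two R (hdeg _ (by simp) (by simp)) ?_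
    (hadj j.succ) (hinj.ne ?_)
  · rw [← Fin.succ_castSucc]
    exact (hadj j.castSucc).symm
  · simp only [ne_eq, Fin.ext_iff, Fin.val_castSucc, Fin.val_succ]
    omega

end SimpleGraph

theorem Matrix.IsSymm.dotProduct_pow_add_self_mulVec {n R : Type*} [Fintype n] [DecidableEq n]
    [CommSemiring R] {A : Matrix n n R} (hA : A.IsSymm) (k : ℕ) (x : n → R) :
    x ⬝ᵥ (A ^ (k + k) *ᵥ x) = (A ^ k *ᵥ x) ⬝ᵥ (A ^ k *ᵥ x) := by
  rw [pow_add, ← mulVec_mulVec, dotProduct_mulVec, ← mulVec_transpose, (hA.pow k).eq]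

theorem Matrix.IsHermitian.posSemidef_aeval {n 𝕜 : Type*} [Fintype n] [DecidableEq n]
    [RCLike 𝕜] {A : Matrix n n 𝕜} (hA : A.IsHermitian) {p : ℝ[X]}
    (hp : ∀ θ ∈ spectrum ℝ A, 0 ≤ p.eval θ) : (aeval A p).PosSemidef := by
  rw [← nonneg_iff_posSemidef, ← cfc_polynomial p A hA.isSelfAdjoint]
  exact cfc_nonneg hp

noncomputable def sextic : ℝ[X] := X ^ 6 - C 5 * X ^ 4 + C 4 * X ^ 2

theorem sextic_eval_intCast_nonneg (z : ℤ) : 0 ≤ sextic.eval (z : ℝ) := by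
  have key : 0 ≤ z ^ 6 - 5 * z ^ 4 + 4 * z ^ 2 := by
    rcases (show z ≤ -2 ∨ (-1 ≤ z ∧ z ≤ 1) ∨ 2 ≤ z by omega) with h | ⟨h₁, h₂⟩ | h
    rotate_left
    · interval_cases z <;> norm_num
    all_goals
      have h4 : 4 ≤ z ^ 2 := by nlinarith
      calc 0 ≤ z ^ 2 * ((z ^ 2 - 1) * (z ^ 2 - 4)) :=
            mul_nonneg (sq_nonneg z) (mul_nonneg (by linarith) (by linarith))
        _ = _ := by ring
  simp only [sextic, eval_add, eval_sub, eval_mul, eval_C, eval_pow, eval_X]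
  exact_mod_cast key

theorem dotProduct_aeval_sextic_mulVec_eq {n : Type*} [Fintype n] [DecidableEq n]
    {A : Matrix n n ℝ} (hA : A.IsSymm) (x : n → ℝ) :
    x ⬝ᵥ (aeval A sextic *ᵥ x) =
      (A ^ 3 *ᵥ x) ⬝ᵥ (A ^ 3 *ᵥ x) - 5 * (A ^ 2 *ᵥ x) ⬝ᵥ (A ^ 2 *ᵥ x)
        + 4 * (A ^ 1 *ᵥ x) ⬝ᵥ (A ^ 1 *ᵥ x) := by
  simp only [← hA.dotProduct_pow_add_self_mulVec]
  simp [sextic, sub_mulVec, add_mulVec, dotProduct_sub, dotProduct_add,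
    Algebra.algebraMap_eq_smul_one, smul_mulVec]

theorem dotProduct_aeval_sextic_adjMatrix_mulVec_single_middle {V : Type*} [Fintype V]
    [DecidableEq V] {G : SimpleGraph V} [DecidableRel G.Adj] {v : Fin 7 → V}
    (hinj : Function.Injective v) (hadj : ∀ i : Fin 6, G.Adj (v i.castSucc) (v i.succ))
    (hdeg : ∀ i : Fin 7, 0 < i.1 → i.1 < 6 → G.degree (v i) = 2) :
    Pi.single (v 3) 1 ⬝ᵥ (aeval (G.adjMatrix ℝ) sextic *ᵥ Pi.single (v 3) 1) = -2 := by
  set A := G.adjMatrix ℝ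
  set s : Fin 7 → V → ℝ := fun i ↦ Pi.single (v i) 1 with hs
  have step := G.adjMatrix_mulVec_single_one_of_internal ℝ hinj hadj hdeg
  have h1 : A *ᵥ s 1 = s 0 + s 2 := step 0
  have h2 : A *ᵥ s 2 = s 1 + s 3 := step 1
  have h3 : A *ᵥ s 3 = s 2 + s 4 := step 2
  have h4 : A *ᵥ s 4 = s 3 + s 5 := step 3
  have h5 : A *ᵥ s 5 = s 4 + s 6 := step 4
  have p1 : A ^ 1 *ᵥ s 3 = s 2 + s 4 := by rw [pow_one, h3]
  have p2 : A ^ 2 *ᵥ s 3 = s 1 + s 3 + (s 3 + s 5) := by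
    rw [pow_succ', ← mulVec_mulVec, p1, mulVec_add, h2, h4]
  have p3 : A ^ 3 *ᵥ s 3 = s 0 + s 2 + (s 2 + s 4) + (s 2 + s 4 + (s 4 + s 6)) := by
    rw [pow_succ', ← mulVec_mulVec, p2, mulVec_add, mulVec_add, mulVec_add, h1, h3, h5]
  rw [dotProduct_aeval_sextic_mulVec_eq G.isSymm_adjMatrix, p1, p2, p3]
  simp [hs, dotProduct_add, hinj.eq_iff]
  norm_num

theorem subdivided_edge_seven_not_integral_general {V : Type*} [Fintype V] [DecidableEq V]
    (G : SimpleGraph V) [DecidableRel G.Adj]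
    (v : Fin 7 → V) (hinj : Function.Injective v)
    (hadj : ∀ i : Fin 6, G.Adj (v i.castSucc) (v i.succ))
    (hdeg : ∀ i : Fin 7, 0 < i.1 → i.1 < 6 → G.degree (v i) = 2) :
    ∃ θ : ℝ, ((G.adjMatrix ℝ).charpoly).eval θ = 0 ∧ ∀ z : ℤ, θ ≠ (z : ℝ) := by
  by_contra! hint
  have hpsd := (G.isHermitian_adjMatrix ℝ).posSemidef_aeval (p := sextic) fun θ hθ ↦ by
    obtain ⟨z, rfl⟩ := hint θ (mem_spectrum_iff_isRoot_charpoly.mp hθ)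
    exact sextic_eval_intCast_nonneg z
  have hneg := hpsd.dotProduct_mulVec_nonneg (Pi.single (v 3) 1)
  rw [star_trivial, dotProduct_aeval_sextic_adjMatrix_mulVec_single_middle hinj hadj hdeg] at hneg
  norm_num at hneg

/-- A tree containing a subdivided edge with `7` vertices (a path of `7`
vertices whose `5` internal vertices have degree `2` in the tree) is not an
integral tree: some eigenvalue of its adjacency matrix is not an integer. -/
theorem subdivided_edge_seven_not_integral {V : Type*} [Fintype V] [DecidableEq V]
    (G : SimpleGraph V) [DecidableRel G.Adj] (hT : G.IsTree)
    (v : Fin 7 → V) (hinj : Function.Injective v)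
    (hadj : ∀ i : Fin 6, G.Adj (v i.castSucc) (v i.succ))
    (hdeg : ∀ i : Fin 7, 0 < i.1 → i.1 < 6 → G.degree (v i) = 2) :
    ∃ θ : ℝ, ((G.adjMatrix ℝ).charpoly).eval θ = 0 ∧ ∀ z : ℤ, θ ≠ (z : ℝ) :=
  subdivided_edge_seven_not_integral_general G v hinj hadj hdeg
end

section
/- Let T be a rooted tree with d_i the recursively defined rational functions d_i(x) = x - Σ_{j child of i} 1/d_j(x). Suppose θ₀ ∈ ℝ is a simple zero of d_j for a vertex j with parent j-1, and θ₀ is not a zero or pole of the other summands in d_{j-1}. Then θ₀ is a pole of d_{j-1}, and for sufficiently small ε > 0: d_{j-1}(θ₀ - ε) > 0, d_{j-1}(θ₀ + ε) < 0, d_j(θ₀ - ε) < 0, and d_j(θ₀ + ε) > 0. -/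
/-!
By induction along the recursion, `d i` is differentiable with derivative
`1 + ∑ d j' / d j ^ 2 ≥ 1` at every point where no strict descendant of `i` vanishes.
So `d c` has positive derivative at its zero `θ₀`: it tends to `0` from below on the
left of `θ₀` and from above on the right. Splitting off the `c`-summand,
`d p = g - (d c)⁻¹` with `g` continuous at `θ₀`, so `d p → +∞` on the left and
`d p → -∞` on the right.
-/

open Finset

open Filter Topology

section Calculus

variable {f : ℝ → ℝ} {x f' b : ℝ}

theorem HasDerivAt.tendsto_nhdsLT_zero (hf : HasDerivAt f f' x) (hf' : 0 < f') (hx : f x = 0) :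
    Tendsto f (𝓝[<] x) (𝓝[<] 0) := by
  refine tendsto_nhdsWithin_iff.2 ⟨hx ▸ hf.continuousAt.tendsto.mono_left nhdsWithin_le_nhds, ?_⟩
  have hslope := (hasDerivAt_iff_tendsto_slope.1 hf).mono_left (nhdsLT_le_nhdsNE x)
  filter_upwards [hslope.eventually (eventually_gt_nhds hf'), self_mem_nhdsWithin]
    with t ht hlt using neg_of_slope_pos hlt ht hx

theorem HasDerivAt.tendsto_nhdsGT_zero (hf : HasDerivAt f f' x) (hf' : 0 < f') (hx : f x = 0) :
    Tendsto f (𝓝[>] x) (𝓝[>] 0) := by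
  refine tendsto_nhdsWithin_iff.2 ⟨hx ▸ hf.continuousAt.tendsto.mono_left nhdsWithin_le_nhds, ?_⟩
  have hslope := (hasDerivAt_iff_tendsto_slope.1 hf).mono_left (nhdsGT_le_nhdsNE x)
  filter_upwards [hslope.eventually (eventually_gt_nhds hf'), self_mem_nhdsWithin]
    with t ht hgt using pos_of_slope_pos hgt ht hx

theorem tendsto_sub_inv_atTop_of_tendsto_nhdsLT_zero {α : Type*} {l : Filter α} {f g : α → ℝ}
    (hf : Tendsto f l (𝓝[<] 0)) (hg : Tendsto g l (𝓝 b)) :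
    Tendsto (fun t => g t - (f t)⁻¹) l atTop := by
  simpa only [sub_eq_add_neg, Function.comp_def] using
    hg.add_atTop (tendsto_neg_atBot_atTop.comp (tendsto_inv_nhdsLT_zero.comp hf))

theorem tendsto_sub_inv_atBot_of_tendsto_nhdsGT_zero {α : Type*} {l : Filter α} {f g : α → ℝ}
    (hf : Tendsto f l (𝓝[>] 0)) (hg : Tendsto g l (𝓝 b)) :
    Tendsto (fun t => g t - (f t)⁻¹) l atBot := by
  simpa only [sub_eq_add_neg, Function.comp_def] using
    hg.add_atBot (tendsto_neg_atTop_atBot.comp (tendsto_inv_nhdsGT_zero.comp hf))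

theorem exists_pos_of_eventually_nhdsLT_nhdsGT {P Q : ℝ → Prop}
    (hP : ∀ᶠ t in 𝓝[<] x, P t) (hQ : ∀ᶠ t in 𝓝[>] x, Q t) :
    ∃ ε₀ > 0, ∀ ε : ℝ, 0 < ε → ε < ε₀ → P (x - ε) ∧ Q (x + ε) := by
  obtain ⟨a, hax, ha⟩ := (nhdsLT_basis x).eventually_iff.1 hP
  obtain ⟨b, hxb, hb⟩ := (nhdsGT_basis x).eventually_iff.1 hQ
  refine ⟨min (x - a) (b - x), lt_min (sub_pos.2 hax) (sub_pos.2 hxb), fun ε hε hεlt => ?_⟩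
  have h₁ := min_le_left (x - a) (b - x)
  have h₂ := min_le_right (x - a) (b - x)
  exact ⟨ha ⟨by linarith, by linarith⟩, hb ⟨by linarith, by linarith⟩⟩

end Calculus

section Tree

variable {n : ℕ} {parent : Fin n → Fin n}

def children (parent : Fin n → Fin n) (i : Fin n) : Finset (Fin n) :=
  univ.filter fun j => parent j = i ∧ i < j

theorem mem_children {i j : Fin n} : j ∈ children parent i ↔ parent j = i ∧ i < j := by
  simp [children]

abbrev StrictDesc (parent : Fin n → Fin n) : Fin n → Fin n → Prop :=
  Relation.TransGen fun i j => j ∈ children parent i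

theorem StrictDesc.lt {i k : Fin n} (h : StrictDesc parent i k) : i < k := by
  induction h with
  | single hk => exact (mem_children.1 hk).2
  | tail _ hk ih => exact ih.trans (mem_children.1 hk).2

theorem StrictDesc.le_parent {i k : Fin n} (h : StrictDesc parent i k) : i ≤ parent k := by
  obtain ⟨j, hij, hk⟩ := Relation.TransGen.tail'_iff.1 h
  rw [(mem_children.1 hk).1]
  rcases hij.cases_head with rfl | ⟨_, hj, hjk⟩
  · exact le_rfl
  · exact (StrictDesc.lt (.head' hj hjk)).le

theorem StrictDesc.desc {i k : Fin n} (h : StrictDesc parent i k) : Desc n parent i k := by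
  suffices ∃ m ≤ k.1, parent^[m] k = i by
    obtain ⟨m, hm, hmk⟩ := this
    exact ⟨m, mem_range.2 (by omega), hmk⟩
  induction h with
  | @single k hk =>
    obtain ⟨hpk, hik⟩ := mem_children.1 hk
    exact ⟨1, by have : i.1 < k.1 := hik; omega, hpk⟩
  | @tail j k _ hk ih =>
    obtain ⟨m, hm, hmj⟩ := ih
    obtain ⟨hpk, hjk⟩ := mem_children.1 hk
    refine ⟨m + 1, by have : j.1 < k.1 := hjk; omega, ?_⟩
    rw [Function.iterate_succ_apply, hpk, hmj]

theorem StrictDesc.not_mem_children {p j k : Fin n} (hj : j ∈ children parent p)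
    (hk : StrictDesc parent j k) : k ∉ children parent p := fun hkp => by
  have := hk.le_parent
  rw [(mem_children.1 hkp).1] at this
  exact this.not_gt (mem_children.1 hj).2

theorem dReal_eq (i : Fin n) (θ : ℝ) :
    dReal n parent i θ = θ - ∑ j ∈ children parent i, (dReal n parent j θ)⁻¹ := by
  rw [dReal, sum_attach _ fun j => (dReal n parent j θ)⁻¹]
  rfl

theorem dReal_eq_sub_inv {p c : Fin n} (hc : c ∈ children parent p) (θ : ℝ) :
    dReal n parent p θ =
      (θ - ∑ j ∈ (children parent p).erase c, (dReal n parent j θ)⁻¹) -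
        (dReal n parent c θ)⁻¹ := by
  rw [dReal_eq, ← add_sum_erase _ _ hc]
  ring

theorem exists_one_le_hasDerivAt_dReal (i : Fin n) {θ : ℝ}
    (h : ∀ k, StrictDesc parent i k → dReal n parent k θ ≠ 0) :
    ∃ D, 1 ≤ D ∧ HasDerivAt (dReal n parent i) D θ := by
  induction i using WellFoundedGT.induction with
  | _ i ih =>
  have hchild : ∀ j ∈ children parent i, ∃ D, 1 ≤ D ∧ HasDerivAt (dReal n parent j) D θ :=
    fun j hj => ih j (mem_children.1 hj).2 fun k hk => h k (.head hj hk)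
  choose! D hD1 hD using hchild
  have hsum := HasDerivAt.fun_sum fun j hj => (hD j hj).inv (h j (.single hj))
  refine ⟨1 - ∑ j ∈ children parent i, -D j / dReal n parent j θ ^ 2, ?_, ?_⟩
  · have : ∑ j ∈ children parent i, -D j / dReal n parent j θ ^ 2 ≤ 0 :=
      sum_nonpos fun j hj => div_nonpos_of_nonpos_of_nonneg (by linarith [hD1 j hj]) (sq_nonneg _)
    linarith
  · rw [funext (dReal_eq i)]
    exact (hasDerivAt_id θ).sub hsum

end Tree

theorem dReal_sign_change_general (n : ℕ) (parent : Fin n → Fin n)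
    (p c : Fin n) (hpc : parent c = p) (hcp : p < c) (θ₀ : ℝ)
    (hz : dReal n parent c θ₀ = 0)
    (hother : ∀ j : Fin n, Desc n parent p j → j ≠ p → j ≠ c →
      dReal n parent j θ₀ ≠ 0) :
    Filter.Tendsto (fun t => |dReal n parent p t|)
        (nhdsWithin θ₀ {θ₀}ᶜ) Filter.atTop
    ∧ ∃ ε₀ > 0, ∀ ε : ℝ, 0 < ε → ε < ε₀ →
        0 < dReal n parent p (θ₀ - ε) ∧ dReal n parent p (θ₀ + ε) < 0 ∧
        dReal n parent c (θ₀ - ε) < 0 ∧ 0 < dReal n parent c (θ₀ + ε) := by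
  have hc : c ∈ children parent p := mem_children.2 ⟨hpc, hcp⟩
  have hreg : ∀ j ∈ children parent p, ∀ k, StrictDesc parent j k → dReal n parent k θ₀ ≠ 0 :=
    fun j hj k hk => hother k (StrictDesc.desc (.head hj hk)) (StrictDesc.lt (.head hj hk)).ne'
      fun hkc => hk.not_mem_children hj (hkc ▸ hc)
  obtain ⟨D, hD, hdc⟩ := exists_one_le_hasDerivAt_dReal c (hreg c hc)
  have hcl := hdc.tendsto_nhdsLT_zero (by linarith) hz
  have hcr := hdc.tendsto_nhdsGT_zero (by linarith) hz
  have hinv : ∀ j ∈ (children parent p).erase c,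
      ContinuousAt (fun t => (dReal n parent j t)⁻¹) θ₀ := by
    intro j hj
    obtain ⟨hjc, hj⟩ := mem_erase.1 hj
    obtain ⟨_, -, hdj⟩ := exists_one_le_hasDerivAt_dReal j (hreg j hj)
    exact hdj.continuousAt.inv₀ <|
      hother j (StrictDesc.desc (.single hj)) (mem_children.1 hj).2.ne' hjc
  have hg : ContinuousAt (fun t => t - ∑ j ∈ (children parent p).erase c, (dReal n parent j t)⁻¹)
      θ₀ := continuousAt_id.sub (tendsto_finsetSum _ hinv)
  rw [funext (dReal_eq_sub_inv hc)]
  have hpl := tendsto_sub_inv_atTop_of_tendsto_nhdsLT_zero hcl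
    (hg.tendsto.mono_left nhdsWithin_le_nhds)
  have hpr := tendsto_sub_inv_atBot_of_tendsto_nhdsGT_zero hcr
    (hg.tendsto.mono_left nhdsWithin_le_nhds)
  refine ⟨?_, ?_⟩
  · rw [← nhdsLT_sup_nhdsGT]
    exact (tendsto_abs_atTop_atTop.comp hpl).sup (tendsto_abs_atBot_atTop.comp hpr)
  · obtain ⟨ε₀, hε₀, h⟩ := exists_pos_of_eventually_nhdsLT_nhdsGT
      ((hpl.eventually_gt_atTop 0).and (hcl.eventually self_mem_nhdsWithin))
      ((hpr.eventually_lt_atBot 0).and (hcr.eventually self_mem_nhdsWithin))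
    exact ⟨ε₀, hε₀, fun ε hε hεlt => by have := h ε hε hεlt; tauto⟩

/-- Sign dynamics at a zero of a child function.  Let `c` be a child of `p`
(`parent c = p`, `p < c`), let `θ₀` be a zero of `d c`, and suppose `θ₀` is not
a zero or pole of the other summands in the recursion for `d p` (i.e. every
strict descendant of `p` other than `c` has nonzero value at `θ₀`; since
`d c` has derivative `≥ 1`, its zero at `θ₀` is simple).  Then `θ₀` is a pole
of `d p`, and for all sufficiently small `ε > 0`:
`d p (θ₀ - ε) > 0`, `d p (θ₀ + ε) < 0`, `d c (θ₀ - ε) < 0`, `d c (θ₀ + ε) > 0`. -/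
theorem dReal_sign_change (n : ℕ) (hn : 0 < n) (parent : Fin n → Fin n)
    (hroot : parent ⟨0, hn⟩ = ⟨0, hn⟩)
    (hpar : ∀ j : Fin n, j ≠ ⟨0, hn⟩ → parent j < j)
    (p c : Fin n) (hpc : parent c = p) (hcp : p < c) (θ₀ : ℝ)
    (hz : dReal n parent c θ₀ = 0)
    (hother : ∀ j : Fin n, Desc n parent p j → j ≠ p → j ≠ c →
      dReal n parent j θ₀ ≠ 0) :
    Filter.Tendsto (fun t => |dReal n parent p t|)
        (nhdsWithin θ₀ {θ₀}ᶜ) Filter.atTop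
    ∧ ∃ ε₀ > 0, ∀ ε : ℝ, 0 < ε → ε < ε₀ →
        0 < dReal n parent p (θ₀ - ε) ∧ dReal n parent p (θ₀ + ε) < 0 ∧
        dReal n parent c (θ₀ - ε) < 0 ∧ 0 < dReal n parent c (θ₀ + ε) :=
  dReal_sign_change_general n parent p c hpc hcp θ₀ hz hother
end

section
/- Let σ be a permutation of the vertex set of a tree G such that every vertex k in the support of σ satisfies that the term Π_k (xI - A(G))_{k,σ(k)} is nonzero as a polynomial. Then σ is a product of disjoint transpositions, each transposition corresponding to an edge of G. Consequently, in the Leibniz expansion of det(xI - A(G)) for a forest G, only permutations that are products of disjoint transpositions along edges contribute. -/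
/-!
If `σ k ≠ k` and `σ (σ k) ≠ k`, follow the cycle of `σ` from `σ k` back to `k`: each step
`x ↦ σ x` with `x ≠ k` moves along an edge of `G` other than `s(k, σ k)`. So `σ k` and `k` stay
connected after deleting that edge, i.e. `s(k, σ k)` is not a bridge, which contradicts acyclicity.
-/

open SimpleGraph Equiv

theorem Function.of_iterate_eq {α : Type*} {f : α → α} {p : α → Prop} {a b : α} {n : ℕ}
    (ha : p a) (hstep : ∀ x, p x → x ≠ b → p (f x)) (hn : f^[n] a = b) : p b := by
  induction n generalizing a with
  | zero => exact hn ▸ ha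
  | succ n ih =>
    by_cases hab : a = b
    · exact hab ▸ ha
    · exact ih (hstep a ha hab) hn

namespace SimpleGraph

variable {V : Type*} {G : SimpleGraph V} {σ : Perm V}

theorem deleteEdges_adj_apply {k x : V} (hadj : G.Adj x (σ x)) (hkk : σ (σ k) ≠ k)
    (hxk : x ≠ k) : (G.deleteEdges {s(k, σ k)}).Adj x (σ x) := by
  refine (deleteEdges_adj ..).mpr ⟨hadj, ?_⟩
  rw [Set.mem_singleton_iff, Sym2.eq_iff]
  rintro (⟨rfl, -⟩ | ⟨rfl, hσ⟩)
  exacts [hxk rfl, hkk hσ]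

theorem deleteEdges_reachable_apply_self [Finite V] (h : ∀ x, σ x ≠ x → G.Adj x (σ x)) {k : V}
    (hkk : σ (σ k) ≠ k) : (G.deleteEdges {s(k, σ k)}).Reachable (σ k) k := by
  obtain ⟨n, hn⟩ := (Perm.sameCycle_apply_left.mpr (Perm.SameCycle.refl σ k)).exists_nat_pow_eq
  refine Function.of_iterate_eq Reachable.rfl (fun x hreach hxk => ?_)
    ((Perm.iterate_eq_pow σ n).symm ▸ hn)
  by_cases hx : σ x = x
  · rwa [hx]
  · exact hreach.trans (deleteEdges_adj_apply (h x hx) hkk hxk).reachable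

end SimpleGraph

/-- In the Leibniz expansion of `det (xI - A(G))` for a forest `G`, a
permutation `σ` contributes a nonzero term only if every non-fixed point `k`
satisfies `G.Adj k (σ k)`.  Any such permutation is a product of disjoint
transpositions along edges of `G`; in particular it is an involution. -/
theorem forest_leibniz_involution {V : Type*} [Fintype V] (G : SimpleGraph V)
    (hG : G.IsAcyclic) (σ : Equiv.Perm V)
    (h : ∀ k, σ k ≠ k → G.Adj k (σ k)) :
    ∀ k, σ (σ k) = k := by
  intro k
  by_cases hk : σ k = k
  · rw [hk, hk]
  by_contra hkk
  have hbridge : G.IsBridge s(k, σ k) := isAcyclic_iff_forall_adj_isBridge.mp hG (h k hk)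
  exact isBridge_iff.mp hbridge (deleteEdges_reachable_apply_self h hkk).symm
end
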